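/- arXiv:2205.09711 — 2 statements merged into one kernel-verified Lean document; each statement's English description precedes it below -/
import Mathlib

section
/- Let d ≥ 1 and let i, j, k, l ∈ Fin d. Then ∫ U, U(i,j) · conj(U(k,l)) dμ_d = 1/d if i = k and j = l, and 0 otherwise. -/
open MeasureTheory Matrix
open scoped ComplexConjugate

noncomputable section

local instance {d : ℕ} : MeasurableSpace (Matrix.unitaryGroup (Fin d) ℂ) := borel _

local instance {d : ℕ} : BorelSpace (Matrix.unitaryGroup (Fin d) ℂ) := ⟨rfl⟩

namespace WeingartenAux

variable {d : ℕ}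

lemma contEntry (i j : Fin d) :
    Continuous fun U : Matrix.unitaryGroup (Fin d) ℂ => (U : Matrix (Fin d) (Fin d) ℂ) i j :=
  (continuous_apply j).comp ((continuous_apply i).comp continuous_subtype_val)

lemma integrableF (μ : Measure (Matrix.unitaryGroup (Fin d) ℂ)) [IsFiniteMeasure μ]
    (i j k l : Fin d) :
    Integrable (fun U : Matrix.unitaryGroup (Fin d) ℂ =>
      (U : Matrix (Fin d) (Fin d) ℂ) i j * conj ((U : Matrix (Fin d) (Fin d) ℂ) k l)) μ := by
  have hc : Continuous (fun U : Matrix.unitaryGroup (Fin d) ℂ =>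
      (U : Matrix (Fin d) (Fin d) ℂ) i j * conj ((U : Matrix (Fin d) (Fin d) ℂ) k l)) :=
    (contEntry i j).mul (continuous_star.comp (contEntry k l))
  refine (integrable_const (1 : ℝ)).mono' hc.aestronglyMeasurable ?_
  filter_upwards with U
  rw [norm_mul, RCLike.norm_conj]
  calc ‖(U : Matrix (Fin d) (Fin d) ℂ) i j‖ * ‖(U : Matrix (Fin d) (Fin d) ℂ) k l‖
      ≤ 1 * 1 := by
        apply mul_le_mul (entry_norm_bound_of_unitary U.2 i j)
          (entry_norm_bound_of_unitary U.2 k l) (norm_nonneg _) zero_le_one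
    _ = 1 := by ring

lemma phase_mem (i : Fin d) :
    Matrix.diagonal (fun m => if m = i then (-1 : ℂ) else 1) ∈ Matrix.unitaryGroup (Fin d) ℂ := by
  rw [Matrix.mem_unitaryGroup_iff, Matrix.star_eq_conjTranspose, Matrix.diagonal_conjTranspose,
    Matrix.diagonal_mul_diagonal]
  ext m n
  simp only [Matrix.diagonal_apply, Matrix.one_apply, Pi.mul_apply, Pi.star_apply]
  by_cases h : m = n
  · subst h
    by_cases h2 : m = i <;> simp [h2]
  · simp [h]

lemma perm_mem (σ : Equiv.Perm (Fin d)) :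
    (Matrix.of fun a b => if b = σ a then (1 : ℂ) else 0) ∈ Matrix.unitaryGroup (Fin d) ℂ := by
  rw [Matrix.mem_unitaryGroup_iff]
  ext a b
  simp only [Matrix.mul_apply, Matrix.star_eq_conjTranspose, Matrix.conjTranspose_apply,
    Matrix.of_apply, Matrix.one_apply]
  have : ∀ n : Fin d, (if n = σ a then (1 : ℂ) else 0) * star (if n = σ b then (1 : ℂ) else 0)
      = if n = σ a then (if σ a = σ b then (1 : ℂ) else 0) else 0 := by
    intro n
    split_ifs with h1 h2 h3 <;> simp_all
  rw [Finset.sum_congr rfl fun n _ => this n, Finset.sum_ite_eq' Finset.univ (σ a)]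
  simp [EmbeddingLike.apply_eq_iff_eq, eq_comm]

end WeingartenAux

open WeingartenAux

/-- **First-moment Weingarten formula**:
`∫ U, U i j * conj (U k l) dμ = δ_{ik} δ_{jl} / d` over the Haar probability
measure on the unitary group. -/
theorem weingarten_first_moment (d : ℕ) (hd : 1 ≤ d) (i j k l : Fin d)
    (μ : Measure (Matrix.unitaryGroup (Fin d) ℂ))
    [μ.IsHaarMeasure] [IsProbabilityMeasure μ] :
    ∫ U : Matrix.unitaryGroup (Fin d) ℂ,
        (U : Matrix (Fin d) (Fin d) ℂ) i j * conj ((U : Matrix (Fin d) (Fin d) ℂ) k l) ∂μ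
      = if i = k ∧ j = l then (1 / (d : ℂ)) else 0 := by
  have hdC : (d : ℂ) ≠ 0 := Nat.cast_ne_zero.mpr (by omega)
  by_cases hik : i = k
  · subst hik
    -- all diagonal (in row index) integrals are equal, by left invariance under row swaps
    have hswap : ∀ a : Fin d,
        (∫ U : Matrix.unitaryGroup (Fin d) ℂ,
          (U : Matrix (Fin d) (Fin d) ℂ) a j * conj ((U : Matrix (Fin d) (Fin d) ℂ) a l) ∂μ)
        = ∫ U : Matrix.unitaryGroup (Fin d) ℂ,
          (U : Matrix (Fin d) (Fin d) ℂ) i j * conj ((U : Matrix (Fin d) (Fin d) ℂ) i l) ∂μ := by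
      intro a
      set g : Matrix.unitaryGroup (Fin d) ℂ := ⟨_, perm_mem (Equiv.swap i a)⟩ with hg
      have hinv := integral_mul_left_eq_self (μ := μ)
        (fun U : Matrix.unitaryGroup (Fin d) ℂ =>
          (U : Matrix (Fin d) (Fin d) ℂ) i j * conj ((U : Matrix (Fin d) (Fin d) ℂ) i l)) g
      rw [← hinv]
      refine integral_congr_ae (Filter.Eventually.of_forall fun U => ?_)
      have hcoe : ((g * U : Matrix.unitaryGroup (Fin d) ℂ) : Matrix (Fin d) (Fin d) ℂ)
          = (Matrix.of fun a' b => if b = Equiv.swap i a a' then (1 : ℂ) else 0)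
            * (U : Matrix (Fin d) (Fin d) ℂ) := rfl
      have hentry : ∀ m : Fin d,
          ((g * U : Matrix.unitaryGroup (Fin d) ℂ) : Matrix (Fin d) (Fin d) ℂ) i m
            = (U : Matrix (Fin d) (Fin d) ℂ) a m := by
        intro m
        rw [hcoe]
        simp [Matrix.mul_apply, Matrix.of_apply, ite_mul, one_mul, zero_mul,
          Finset.sum_ite_eq, Finset.sum_ite_eq', Equiv.swap_apply_left]
      simp only [hentry j, hentry l]
    have hsum : (∑ a : Fin d, ∫ U : Matrix.unitaryGroup (Fin d) ℂ,
        (U : Matrix (Fin d) (Fin d) ℂ) a j * conj ((U : Matrix (Fin d) (Fin d) ℂ) a l) ∂μ)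
        = if l = j then 1 else 0 := by
      rw [← integral_finset_sum _ fun a _ => integrableF μ a j a l]
      have hcol : ∀ U : Matrix.unitaryGroup (Fin d) ℂ,
          (∑ a : Fin d, (U : Matrix (Fin d) (Fin d) ℂ) a j
              * conj ((U : Matrix (Fin d) (Fin d) ℂ) a l))
            = if l = j then (1 : ℂ) else 0 := by
        intro U
        have h1 : star (U : Matrix (Fin d) (Fin d) ℂ) * (U : Matrix (Fin d) (Fin d) ℂ) = 1 :=
          U.2.1
        have h2 := congrArg (fun M : Matrix (Fin d) (Fin d) ℂ => M l j) h1
        simpa [Matrix.mul_apply, Matrix.star_eq_conjTranspose, Matrix.conjTranspose_apply,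
          Matrix.one_apply, mul_comm] using h2
      rw [integral_congr_ae (Filter.Eventually.of_forall fun U => hcol U)]
      simp [integral_const]
    rw [Finset.sum_congr rfl fun a _ => hswap a, Finset.sum_const, Finset.card_univ,
      Fintype.card_fin, nsmul_eq_mul] at hsum
    have hval : (∫ U : Matrix.unitaryGroup (Fin d) ℂ,
        (U : Matrix (Fin d) (Fin d) ℂ) i j * conj ((U : Matrix (Fin d) (Fin d) ℂ) i l) ∂μ)
        = (if l = j then 1 else 0) / (d : ℂ) := by
      rw [eq_div_iff hdC, mul_comm, hsum]
    rw [hval]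
    by_cases hjl : j = l
    · subst hjl; simp
    · simp [hjl, Ne.symm hjl]
  · -- off-diagonal rows: phase trick
    set g : Matrix.unitaryGroup (Fin d) ℂ := ⟨_, phase_mem i⟩ with hg
    have hinv := integral_mul_left_eq_self (μ := μ)
      (fun U : Matrix.unitaryGroup (Fin d) ℂ =>
        (U : Matrix (Fin d) (Fin d) ℂ) i j * conj ((U : Matrix (Fin d) (Fin d) ℂ) k l)) g
    have hneg : (∫ U : Matrix.unitaryGroup (Fin d) ℂ,
        ((g * U : Matrix.unitaryGroup (Fin d) ℂ) : Matrix (Fin d) (Fin d) ℂ) i j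
          * conj (((g * U : Matrix.unitaryGroup (Fin d) ℂ) : Matrix (Fin d) (Fin d) ℂ) k l) ∂μ)
        = - ∫ U : Matrix.unitaryGroup (Fin d) ℂ,
            (U : Matrix (Fin d) (Fin d) ℂ) i j * conj ((U : Matrix (Fin d) (Fin d) ℂ) k l) ∂μ := by
      rw [← integral_neg]
      refine integral_congr_ae (Filter.Eventually.of_forall fun U => ?_)
      have hcoe : ((g * U : Matrix.unitaryGroup (Fin d) ℂ) : Matrix (Fin d) (Fin d) ℂ)
          = Matrix.diagonal (fun m => if m = i then (-1 : ℂ) else 1)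
            * (U : Matrix (Fin d) (Fin d) ℂ) := rfl
      simp only [hcoe, Matrix.diagonal_mul]
      simp [Ne.symm hik]
    rw [hneg] at hinv
    have h0 : (∫ U : Matrix.unitaryGroup (Fin d) ℂ,
        (U : Matrix (Fin d) (Fin d) ℂ) i j * conj ((U : Matrix (Fin d) (Fin d) ℂ) k l) ∂μ) = 0 := by
      linear_combination (-1/2 : ℂ) * hinv
    rw [h0]
    simp [hik]
end
end

section
/- Let p : ℕ → ℝ be a probability distribution (p n ≥ 0 for all n and ∑' n, p n = 1) with ∑' n, p n · |log₂ (p n)| < ∞, and let H = −∑' n, p n · log₂ (p n) (with convention 0·log₂ 0 = 0). Fix ε > 0 and define, for K ∈ ℕ, the ε-typical set T(K, ε) = { x : Fin K → ℕ | 2^{−K(H+ε)} ≤ ∏_{i < K} p (x i) ≤ 2^{−K(H−ε)} }. Then: (a) T(K, ε) is finite with cardinality |T(K, ε)| ≤ 2^{K(H+ε)} for every K; and (b) for every δ > 0 there exists K₀ such that for all K ≥ K₀, the product probability satisfies ∑_{x ∈ T(K,ε)} ∏_{i < K} p (x i) ≥ 1 − δ and |T(K, ε)| ≥ (1 − δ)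 · 2^{K(H−ε)}. -/
/-!
Under the product weights, the coordinates of a string are i.i.d. with law `p`, and for strings
without zero-probability letters `∏ i, p (x i) = 2 ^ (-∑ i, -log₂ p (x i))`. So a string is
typical as soon as the empirical mean of the surprisal `-log₂ p` is within `ε` of its expectation
`H`, and the weak law of large numbers (here obtained from Etemadi's strong law on the infinite
product space) makes this happen with probability tending to one. The cardinality bounds then
come from comparing the total weight of the typical set with its size times the extreme weights
`2 ^ (-K (H ± ε))` of a typical string.
-/

noncomputable section

/-- The ε-typical set of strings of length `K` for the distribution `p`:
strings whose product probability lies between `2^{-K(H+ε)}` and `2^{-K(H-ε)}`. -/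
def typicalSet (p : ℕ → ℝ) (H ε : ℝ) (K : ℕ) : Set (Fin K → ℕ) :=
  {x | (2 : ℝ) ^ (-(K : ℝ) * (H + ε)) ≤ ∏ i : Fin K, p (x i) ∧
        ∏ i : Fin K, p (x i) ≤ (2 : ℝ) ^ (-(K : ℝ) * (H - ε))}

open MeasureTheory ProbabilityTheory Filter Topology Finset Function

lemma Set.Finite.tsum_subtype_eq_sum {β M : Type*} [AddCommMonoid M] [TopologicalSpace M]
    {s : Set β} (hs : s.Finite) (f : β → M) : ∑' x : s, f x = ∑ x ∈ hs.toFinset, f x := by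
  have := hs.fintype
  rw [tsum_fintype, Finset.sum_subtype hs.toFinset fun _ => hs.mem_toFinset]

section ProductMeasure

variable {α : Type*} [MeasurableSpace α]

theorem weak_law_infinitePi (μ : Measure α) [IsProbabilityMeasure μ] {f : α → ℝ}
    (hf : Integrable f μ) {ε : ℝ} (hε : 0 < ε) :
    Tendsto (fun n : ℕ => Measure.infinitePi (fun _ => μ)
      {ω | ε ≤ |(∑ i ∈ range n, f (ω i)) / n - ∫ a, f a ∂μ|}) atTop (𝓝 0) := by
  set P := Measure.infinitePi fun _ : ℕ => μ
  have hpres (i : ℕ) : MeasurePreserving (eval i) P μ := measurePreserving_eval_infinitePi _ i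
  have hfi (i : ℕ) : AEMeasurable f (P.map (eval i)) := (hpres i).map_eq ▸ hf.aemeasurable
  have hident (i : ℕ) : IdentDistrib (f ∘ eval i) (f ∘ eval 0) P P :=
    ((hpres i).hasLaw.identDistrib (hpres 0).hasLaw).comp_of_aemeasurable (hfi i)
  have hindep : Pairwise ((· ⟂ᵢ[P] ·) on fun i => f ∘ eval i) :=
    fun i j hij => ((iIndepFun_infinitePi (X := fun _ => id) fun _ => measurable_id).indepFun
      hij).comp₀ (measurable_pi_apply i).aemeasurable (measurable_pi_apply j).aemeasurable
      (hfi i) (hfi j)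
  have hint : Integrable (f ∘ eval 0) P := (hpres 0).integrable_comp hf.1 |>.mpr hf
  have hae := strong_law_ae_real _ hint hindep hident
  rw [show P[f ∘ eval 0] = ∫ a, f a ∂μ from (hpres 0).hasLaw.integral_comp hf.1] at hae
  have := tendstoInMeasure_of_tendsto_ae (fun n => ?_) hae (ENNReal.ofReal ε) (by simpa using hε)
  · simpa [edist_dist, Real.dist_eq, ENNReal.ofReal_le_ofReal_iff'] using this
  · simp_rw [div_eq_mul_inv]
    exact .mul_const (aestronglyMeasurable_fun_sum _ fun i _ => (hident i).1.aestronglyMeasurable) _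

lemma infinitePi_map_restrict_fin (μ : Measure α) [IsProbabilityMeasure μ] (K : ℕ) :
    (Measure.infinitePi fun _ : ℕ => μ).map (fun ω (i : Fin K) => ω i) =
      Measure.pi fun _ => μ := by
  have h := (iIndepFun_infinitePi (P := fun _ : ℕ => μ) (X := fun _ x => x)
    fun _ => measurable_id).precomp (Fin.val_injective (n := K))
  rw [h.map_fun_eq_pi_map fun i => (measurable_pi_apply _).aemeasurable]
  exact congrArg Measure.pi (funext fun i => Measure.infinitePi_map_eval _ _)

lemma measureReal_pi_finset {ι : Type*} [Fintype ι] [MeasurableSingletonClass α]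
    (μ : Measure α) [SigmaFinite μ] (F : Finset (ι → α)) :
    (Measure.pi fun _ : ι => μ).real F = ∑ x ∈ F, ∏ i, μ.real {x i} := by
  rw [← sum_measureReal_singleton]
  refine Finset.sum_congr rfl fun x _ => ?_
  simp [Measure.real, Measure.pi_singleton, ENNReal.toReal_prod]

end ProductMeasure

section DiscreteMeasure

variable {α : Type*} [MeasurableSpace α] {p : α → ℝ}

def discreteMeasure (p : α → ℝ) : Measure α :=
  Measure.sum fun a => ENNReal.ofReal (p a) • Measure.dirac a

lemma isProbabilityMeasure_discreteMeasure (hp : ∀ a, 0 ≤ p a) (hsum : HasSum p 1) :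
    IsProbabilityMeasure (discreteMeasure p) := by
  constructor
  simp only [discreteMeasure, Measure.sum_apply _ MeasurableSet.univ, Measure.smul_apply,
    measure_univ, smul_eq_mul, mul_one]
  rw [← ENNReal.ofReal_tsum_of_nonneg hp hsum.summable, hsum.tsum_eq, ENNReal.ofReal_one]

variable [MeasurableSingletonClass α]

lemma discreteMeasure_singleton (a : α) : discreteMeasure p {a} = ENNReal.ofReal (p a) := by
  rw [discreteMeasure, Measure.sum_apply _ (measurableSet_singleton a), tsum_eq_single a]
  · simp
  · intro b hb
    simp [hb]

lemma measureReal_pi_discreteMeasure {ι : Type*} [Fintype ι] (hp : ∀ a, 0 ≤ p a)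
    (hsum : HasSum p 1) (F : Finset (ι → α)) :
    (Measure.pi fun _ : ι => discreteMeasure p).real F = ∑ x ∈ F, ∏ i, p (x i) := by
  have := isProbabilityMeasure_discreteMeasure hp hsum
  rw [measureReal_pi_finset]
  simp [measureReal_def, discreteMeasure_singleton, hp]

variable [Countable α]

lemma ae_discreteMeasure_pos : ∀ᵐ a ∂discreteMeasure p, 0 < p a :=
  ae_iff_of_countable.2 fun a ha => by simpa [discreteMeasure_singleton] using ha

lemma integrable_discreteMeasure_iff (hp : ∀ a, 0 ≤ p a) {f : α → ℝ} :
    Integrable f (discreteMeasure p) ↔ Summable fun a => p a * |f a| := by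
  simp [discreteMeasure, integrable_sum_dirac_iff, ENNReal.toReal_ofReal (hp _)]

lemma integral_discreteMeasure (hp : ∀ a, 0 ≤ p a) (f : α → ℝ) :
    ∫ a, f a ∂discreteMeasure p = ∑' a, p a * f a := by
  simp [discreteMeasure, integral_sum_dirac, ENNReal.toReal_ofReal (hp _)]

end DiscreteMeasure

def surprisal {α : Type*} (p : α → ℝ) (a : α) : ℝ := -Real.logb 2 (p a)

section TypicalSet

variable {p : ℕ → ℝ} {H ε : ℝ} {K : ℕ}

lemma prod_eq_rpow_neg_sum_surprisal {ι : Type*} [Fintype ι] {x : ι → ℕ}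
    (hx : ∀ i, 0 < p (x i)) : ∏ i, p (x i) = 2 ^ (-∑ i, surprisal p (x i)) := by
  simp only [surprisal, sum_neg_distrib, neg_neg]
  rw [← Real.logb_prod _ _ fun i _ => (hx i).ne', Real.rpow_logb two_pos (by norm_num)
    (prod_pos fun i _ => hx i)]

lemma mem_typicalSet_of_abs_sub_lt (hK : 0 < K) {x : Fin K → ℕ} (hx : ∀ i, 0 < p (x i))
    (hdev : |(∑ i, surprisal p (x i)) / K - H| < ε) : x ∈ typicalSet p H ε K := by
  have hK' : (0 : ℝ) < K := Nat.cast_pos.2 hK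
  rw [abs_sub_lt_iff, sub_lt_iff_lt_add, div_lt_iff₀ hK', sub_lt_comm, lt_div_iff₀ hK'] at hdev
  refine ⟨?_, ?_⟩ <;> rw [prod_eq_rpow_neg_sum_surprisal hx] <;>
    apply Real.rpow_le_rpow_of_exponent_le one_le_two <;> nlinarith

lemma finite_typicalSet (hp : ∀ n, 0 ≤ p n)
    (hmass : ∀ F : Finset (Fin K → ℕ), ∑ x ∈ F, ∏ i, p (x i) ≤ 1) :
    (typicalSet p H ε K).Finite := by
  have hq : Summable fun x : Fin K → ℕ => ∏ i, p (x i) :=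
    summable_of_sum_le (fun x => prod_nonneg fun i _ => hp _) hmass
  have hlarge := hq.tendsto_cofinite_zero.eventually
    (gt_mem_nhds (Real.rpow_pos_of_pos two_pos (-(K : ℝ) * (H + ε))))
  exact hlarge.subset fun x hx hlt => (not_lt.2 hx.1) hlt

lemma card_typicalSet_le (hp : ∀ n, 0 ≤ p n)
    (hmass : ∀ F : Finset (Fin K → ℕ), ∑ x ∈ F, ∏ i, p (x i) ≤ 1) :
    (Nat.card (typicalSet p H ε K) : ℝ) ≤ 2 ^ ((K : ℝ) * (H + ε)) := by
  have hT := finite_typicalSet (H := H) (ε := ε) hp hmass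
  have hlow := card_nsmul_le_sum hT.toFinset (fun x => ∏ i, p (x i)) _
    fun x hx => (hT.mem_toFinset.1 hx).1
  rw [nsmul_eq_mul, neg_mul, Real.rpow_neg zero_le_two, ← div_eq_mul_inv,
    div_le_iff₀ (by positivity)] at hlow
  rw [Nat.card_eq_card_finite_toFinset hT]
  exact hlow.trans (mul_le_of_le_one_left (by positivity) (hmass _))

lemma tsum_typicalSet_mul_rpow_le_card (hT : (typicalSet p H ε K).Finite) :
    (∑' x : typicalSet p H ε K, ∏ i, p (x.1 i)) * 2 ^ ((K : ℝ) * (H - ε)) ≤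
      Nat.card (typicalSet p H ε K) := by
  have hup := sum_le_card_nsmul hT.toFinset (fun x => ∏ i, p (x i)) _
    fun x hx => (hT.mem_toFinset.1 hx).2
  rw [nsmul_eq_mul, neg_mul, Real.rpow_neg zero_le_two, ← div_eq_mul_inv,
    le_div_iff₀ (by positivity)] at hup
  rwa [hT.tsum_subtype_eq_sum (fun x => ∏ i, p (x i)), Nat.card_eq_card_finite_toFinset hT]

theorem tendsto_measure_compl_typicalSet (hp : ∀ n, 0 ≤ p n) (hsum : HasSum p 1)
    (hfin : Summable fun n => p n * |Real.logb 2 (p n)|) (hε : 0 < ε) :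
    Tendsto (fun K => (Measure.pi fun _ : Fin K => discreteMeasure p)
      (typicalSet p (∑' n, p n * surprisal p n) ε K)ᶜ) atTop (𝓝 0) := by
  have := isProbabilityMeasure_discreteMeasure hp hsum
  have hint : Integrable (surprisal p) (discreteMeasure p) :=
    (integrable_discreteMeasure_iff hp).2 (by simpa [surprisal] using hfin)
  have hlaw := weak_law_infinitePi _ hint hε
  rw [integral_discreteMeasure hp] at hlaw
  -- Needed because `Real.logb 2 0 = 0`: a zero-probability letter breaks the link between the
  -- surprisal sum and the weight of a string.
  have hpos : ∀ᵐ ω ∂Measure.infinitePi (fun _ : ℕ => discreteMeasure p), ∀ i, 0 < p (ω i) :=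
    ae_all_iff.2 fun i => (measurePreserving_eval_infinitePi (fun _ => discreteMeasure p) i)
      |>.quasiMeasurePreserving.ae ae_discreteMeasure_pos
  refine tendsto_of_tendsto_of_tendsto_of_le_of_le' tendsto_const_nhds hlaw
    (.of_forall fun _ => zero_le) ?_
  filter_upwards [eventually_gt_atTop 0] with K hK
  rw [← infinitePi_map_restrict_fin, Measure.map_apply (by fun_prop)
    (Set.to_countable _).measurableSet]
  refine measure_mono_ae ?_
  filter_upwards [hpos] with ω hω hωT
  by_contra hdev
  refine hωT (mem_typicalSet_of_abs_sub_lt hK (fun i => hω i) ?_)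
  rw [Fin.sum_univ_eq_sum_range (fun i => surprisal p (ω i))]
  exact not_le.1 hdev

theorem tendsto_measureReal_typicalSet (hp : ∀ n, 0 ≤ p n) (hsum : HasSum p 1)
    (hfin : Summable fun n => p n * |Real.logb 2 (p n)|) (hε : 0 < ε) :
    Tendsto (fun K => (Measure.pi fun _ : Fin K => discreteMeasure p).real
      (typicalSet p (∑' n, p n * surprisal p n) ε K)) atTop (𝓝 1) := by
  have := isProbabilityMeasure_discreteMeasure hp hsum
  have hreal := ((ENNReal.tendsto_toReal ENNReal.zero_ne_top).comp
    (tendsto_measure_compl_typicalSet hp hsum hfin hε)).const_sub 1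
  rw [ENNReal.toReal_zero, sub_zero] at hreal
  refine hreal.congr fun K => ?_
  rw [comp_apply, ← measureReal_def, probReal_compl_eq_one_sub (Set.to_countable _).measurableSet,
    sub_sub_cancel]

end TypicalSet

/-- **Typical subspace dimension bounds**: (a) the ε-typical set is finite with at
most `2^{K(H+ε)}` elements; (b) for large `K` it carries probability at least
`1 − δ` and has at least `(1 − δ)·2^{K(H−ε)}` elements. This quantifies the
effective dimension `2^{KH}` of `K` copies of a mode with entropy `H`. -/
theorem typicalSet_card_bounds
    (p : ℕ → ℝ) (hp : ∀ n, 0 ≤ p n) (hsum : ∑' n, p n = 1)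
    (hfin : Summable fun n => p n * |Real.logb 2 (p n)|)
    (H : ℝ) (hH : H = -∑' n, p n * Real.logb 2 (p n))
    (ε : ℝ) (hε : 0 < ε) :
    (∀ K : ℕ, (typicalSet p H ε K).Finite ∧
        (Nat.card (typicalSet p H ε K) : ℝ) ≤ (2 : ℝ) ^ ((K : ℝ) * (H + ε))) ∧
    (∀ δ : ℝ, 0 < δ → ∃ K₀ : ℕ, ∀ K : ℕ, K₀ ≤ K →
        (1 - δ ≤ ∑' x : typicalSet p H ε K, ∏ i : Fin K, p (x.1 i)) ∧
        (1 - δ) * (2 : ℝ) ^ ((K : ℝ) * (H - ε)) ≤ (Nat.card (typicalSet p H ε K) : ℝ)) := by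
  have hps : HasSum p 1 := by
    by_cases h : Summable p
    · exact hsum ▸ h.hasSum
    · exact absurd hsum (by simp [tsum_eq_zero_of_not_summable h])
  have := isProbabilityMeasure_discreteMeasure hp hps
  have hmass (K : ℕ) (F : Finset (Fin K → ℕ)) : ∑ x ∈ F, ∏ i, p (x i) ≤ 1 :=
    (measureReal_pi_discreteMeasure hp hps F).symm.trans_le measureReal_le_one
  refine ⟨fun K => ⟨finite_typicalSet hp (hmass K), card_typicalSet_le hp (hmass K)⟩,
    fun δ hδ => ?_⟩
  have hH' : H = ∑' n, p n * surprisal p n := by simp [hH, surprisal, tsum_neg]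
  obtain ⟨K₀, hK₀⟩ := eventually_atTop.1 <| (hH' ▸ tendsto_measureReal_typicalSet hp hps hfin
    hε).eventually (lt_mem_nhds (sub_lt_self 1 hδ))
  refine ⟨K₀, fun K hK => ?_⟩
  have hT := finite_typicalSet (H := H) (ε := ε) hp (hmass K)
  have hprob : 1 - δ ≤ ∑' x : typicalSet p H ε K, ∏ i, p (x.1 i) := by
    rw [hT.tsum_subtype_eq_sum (fun x => ∏ i, p (x i)), ← measureReal_pi_discreteMeasure hp hps,
      hT.coe_toFinset]
    exact (hK₀ K hK).le
  exact ⟨hprob, (mul_le_mul_of_nonneg_right hprob (by positivity)).trans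
    (tsum_typicalSet_mul_rpow_le_card hT)⟩
end
end
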